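/- Every rule of the sequent calculus G preserves validity: for every instance of a rule of G (respecting its freshness side conditions), if every premiss of that instance is a valid sequent, then its conclusion is a valid sequent. -/

import Mathlib

namespace HXPathD

mutual
  inductive Path (P N M C : Type) : Type where
    | mod  : M → Path P N M C
    | nom  : N → Path P N M C
    | test : Node P N M C → Path P N M C
    | comp : Path P N M C → Path P N M C → Path P N M C

  inductive Node (P N M C : Type) : Type where
    | prop : P → Node P N M C
    | nom  : N → Node P N M C
    | bot  : Node P N M C
    | impl : Node P N M C → Node P N M C → Node P N M C
    | at   : N → Node P N M C → Node P N M C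
    | dia  : M → Node P N M C → Node P N M C
    | eq   : Path P N M C → C → Path P N M C → Node P N M C
    | neq  : Path P N M C → C → Path P N M C → Node P N M C
end

variable {P N M C : Type}

/-- Abbreviations. -/
def Node.neg (φ : Node P N M C) : Node P N M C := .impl φ .bot
def Node.top : Node P N M C := .impl .bot .bot
def Node.and (φ ψ : Node P N M C) : Node P N M C := .neg (.impl φ (.neg ψ))
def Node.iff (φ ψ : Node P N M C) : Node P N M C := .and (.impl φ ψ) (.impl ψ φ)
def Node.box (a : M) (φ : Node P N M C) : Node P N M C := .neg (.dia a (.neg φ))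
def Path.eps : Path P N M C := .test .top

/-- The node expression ⟨α⟩φ, obtained by the abbreviations
    ⟨j:⟩φ := @_jφ, ⟨ψ?⟩φ := ψ∧φ, ⟨αβ⟩φ := ⟨α⟩⟨β⟩φ (with ⟨a⟩φ primitive). -/
def Path.dia : Path P N M C → Node P N M C → Node P N M C
  | .mod a, φ => .dia a φ
  | .nom j, φ => .at j φ
  | .test ψ, φ => .and ψ φ
  | .comp α β, φ => α.dia (β.dia φ)

/-- A comparison ▲ ∈ {=_c, ≠_c : c ∈ Cmp}. -/
inductive Comparison (C : Type) : Type where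
  | ceq  : C → Comparison C
  | cneq : C → Comparison C

/-- The node expression ⟨α ▲ β⟩. -/
def Comparison.node : Comparison C → Path P N M C → Path P N M C → Node P N M C
  | .ceq c, α, β => .eq α c β
  | .cneq c, α, β => .neq α c β

/-- A hybrid data model. -/
structure Model (P N M C : Type) where
  W : Type
  nonempty : Nonempty W
  R : M → W → W → Prop
  E : C → W → W → Prop
  E_equiv : ∀ c, Equivalence (E c)
  g : N → W
  V : P → W → Prop

mutual
  def Model.satPath (𝔐 : Model P N M C) : Path P N M C → 𝔐.W → 𝔐.W → Prop
    | .mod a, n, n' => 𝔐.R a n n'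
    | .nom i, _, n' => 𝔐.g i = n'
    | .test φ, n, n' => n = n' ∧ 𝔐.sat φ n
    | .comp α β, n, n' => ∃ n'', 𝔐.satPath α n n'' ∧ 𝔐.satPath β n'' n'

  def Model.sat (𝔐 : Model P N M C) : Node P N M C → 𝔐.W → Prop
    | .prop p, n => 𝔐.V p n
    | .nom i, n => 𝔐.g i = n
    | .bot, _ => False
    | .impl φ ψ, n => 𝔐.sat φ n → 𝔐.sat ψ n
    | .at i φ, _ => 𝔐.sat φ (𝔐.g i)
    | .dia a φ, n => ∃ n', 𝔐.R a n n' ∧ 𝔐.sat φ n'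
    | .eq α c β, n => ∃ n' n'', 𝔐.satPath α n n' ∧ 𝔐.satPath β n n'' ∧ 𝔐.E c n' n''
    | .neq α c β, n => ∃ n' n'', 𝔐.satPath α n n' ∧ 𝔐.satPath β n n'' ∧ ¬ 𝔐.E c n' n''
end

mutual
  def Path.noms : Path P N M C → Set N
    | .mod _ => ∅
    | .nom i => {i}
    | .test φ => φ.noms
    | .comp α β => α.noms ∪ β.noms

  def Node.noms : Node P N M C → Set N
    | .prop _ => ∅
    | .nom i => {i}
    | .bot => ∅
    | .impl φ ψ => φ.noms ∪ ψ.noms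
    | .at i φ => insert i φ.noms
    | .dia _ φ => φ.noms
    | .eq α _ β => α.noms ∪ β.noms
    | .neq α _ β => α.noms ∪ β.noms
end

/-- Node expressions of the admissible forms for sequents:
    ⟨i: ▲ j:⟩ or @_iφ. -/
def Node.Admissible : Node P N M C → Prop
  | .at _ _ => True
  | .eq (.nom _) _ (.nom _) => True
  | .neq (.nom _) _ (.nom _) => True
  | _ => False

/-- A sequent: antecedent and consequent. -/
abbrev Sequent (P N M C : Type) := Set (Node P N M C) × Set (Node P N M C)

/-- The nominal `j` does not occur in the set `S`. -/
def FreshIn (j : N) (S : Set (Node P N M C)) : Prop := ∀ φ ∈ S, j ∉ φ.noms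

/-- Shape restriction on the axiom (Ax). -/
inductive AxForm : Node P N M C → Prop where
  | prop (i : N) (p : P) : AxForm (.at i (.prop p))
  | nom (i j : N) : AxForm (.at i (.nom j))
  | eq (i : N) (c : C) (j : N) : AxForm (.eq (.nom i) c (.nom j))

/-- Shape restriction on the rule (S1): φ is p, ⊥ or ⟨a⟩k. -/
inductive S1Form : Node P N M C → Prop where
  | prop (p : P) : S1Form (.prop p)
  | bot : S1Form .bot
  | dia (a : M) (k : N) : S1Form (.dia a (.nom k))

/-- One rule instance of the sequent calculus G: `Step cut prems concl` holds iff
    `concl` may be inferred from the premisses `prems` by a rule of G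
    (when `cut = false`, the rule (Cut) is excluded). -/
inductive Step (cut : Bool) : List (Sequent P N M C) → Sequent P N M C → Prop where
  | ax {Γ Δ : Set (Node P N M C)} {φ} (h : AxForm φ) :
      Step cut [] (insert φ Γ, insert φ Δ)
  | bot {Γ Δ : Set (Node P N M C)} (i : N) :
      Step cut [] (insert (.at i .bot) Γ, Δ)
  | implL {Γ Δ : Set (Node P N M C)} (i : N) (φ ψ : Node P N M C) :
      Step cut [(Γ, insert (.at i φ) Δ), (insert (.at i ψ) Γ, Δ)]
        (insert (.at i (.impl φ ψ)) Γ, Δ)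
  | implR {Γ Δ : Set (Node P N M C)} (i : N) (φ ψ : Node P N M C) :
      Step cut [(insert (.at i φ) Γ, insert (.at i ψ) Δ)]
        (Γ, insert (.at i (.impl φ ψ)) Δ)
  | atT {Γ Δ : Set (Node P N M C)} (i : N) :
      Step cut [(insert (.at i (.nom i)) Γ, Δ)] (Γ, Δ)
  | at5 {Γ Δ : Set (Node P N M C)} (i j k : N) :
      Step cut
        [(insert (.at j (.nom k)) (insert (.at i (.nom j)) (insert (.at i (.nom k)) Γ)), Δ)]
        (insert (.at i (.nom j)) (insert (.at i (.nom k)) Γ), Δ)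
  | nomRule {Γ Δ : Set (Node P N M C)} (i j : N)
      (hj : FreshIn j Γ) (hj' : FreshIn j Δ) :
      Step cut [(insert (.at i (.nom j)) Γ, Δ)] (Γ, Δ)
  | s1 {Γ Δ : Set (Node P N M C)} (i j : N) {φ : Node P N M C} (h : S1Form φ) :
      Step cut
        [(insert (.at j φ) (insert (.at i (.nom j)) (insert (.at i φ) Γ)), Δ)]
        (insert (.at i (.nom j)) (insert (.at i φ) Γ), Δ)
  | s2 {Γ Δ : Set (Node P N M C)} (i j k : N) (a : M) :
      Step cut
        [(insert (.at i (.dia a (.nom k)))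
            (insert (.at j (.nom k)) (insert (.at i (.dia a (.nom j))) Γ)), Δ)]
        (insert (.at j (.nom k)) (insert (.at i (.dia a (.nom j))) Γ), Δ)
  | s3 {Γ Δ : Set (Node P N M C)} (i j k : N) (c : C) :
      Step cut
        [(insert (.eq (.nom j) c (.nom k))
            (insert (.at i (.nom j)) (insert (.eq (.nom i) c (.nom k)) Γ)), Δ)]
        (insert (.at i (.nom j)) (insert (.eq (.nom i) c (.nom k)) Γ), Δ)
  | atL {Γ Δ : Set (Node P N M C)} (i j : N) (φ : Node P N M C) :
      Step cut [(insert (.at i φ) Γ, Δ)] (insert (.at j (.at i φ)) Γ, Δ)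
  | atR {Γ Δ : Set (Node P N M C)} (i j : N) (φ : Node P N M C) :
      Step cut [(Γ, insert (.at i φ) Δ)] (Γ, insert (.at j (.at i φ)) Δ)
  | diaL {Γ Δ : Set (Node P N M C)} (i j : N) (a : M) (φ : Node P N M C)
      (hj : FreshIn j (insert (.at i (.dia a φ)) Γ)) (hj' : FreshIn j Δ) :
      Step cut
        [(insert (.at i (.dia a (.nom j))) (insert (.at j φ) Γ), Δ)]
        (insert (.at i (.dia a φ)) Γ, Δ)
  | diaR {Γ Δ : Set (Node P N M C)} (i j : N) (a : M) (φ : Node P N M C) :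
      Step cut
        [(insert (.at i (.dia a (.nom j))) Γ,
          insert (.at i (.dia a φ)) (insert (.at j φ) Δ))]
        (insert (.at i (.dia a (.nom j))) Γ, insert (.at i (.dia a φ)) Δ)
  | cmpL {Γ Δ : Set (Node P N M C)} (i j k : N) (α β : Path P N M C)
      (b : Comparison C) (hjk : j ≠ k)
      (hj : FreshIn j (insert (.at i (b.node α β)) Γ)) (hj' : FreshIn j Δ)
      (hk : FreshIn k (insert (.at i (b.node α β)) Γ)) (hk' : FreshIn k Δ) :
      Step cut
        [(insert (.at i (α.dia (.nom j)))
            (insert (.at i (β.dia (.nom k)))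
              (insert (b.node (.nom j) (.nom k)) Γ)), Δ)]
        (insert (.at i (b.node α β)) Γ, Δ)
  | cmpR {Γ Δ : Set (Node P N M C)} (i j k : N) (α β : Path P N M C)
      (b : Comparison C) :
      Step cut
        [(insert (.at i (α.dia (.nom j))) (insert (.at i (β.dia (.nom k))) Γ),
          insert (.at i (b.node α β)) (insert (b.node (.nom j) (.nom k)) Δ))]
        (insert (.at i (α.dia (.nom j))) (insert (.at i (β.dia (.nom k))) Γ),
          insert (.at i (b.node α β)) Δ)
  | eqT {Γ Δ : Set (Node P N M C)} (i : N) (c : C) :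
      Step cut [(insert (.eq (.nom i) c (.nom i)) Γ, Δ)] (Γ, Δ)
  | eq5 {Γ Δ : Set (Node P N M C)} (i j k : N) (c : C) :
      Step cut
        [(insert (.eq (.nom j) c (.nom k))
            (insert (.eq (.nom i) c (.nom j)) (insert (.eq (.nom i) c (.nom k)) Γ)), Δ)]
        (insert (.eq (.nom i) c (.nom j)) (insert (.eq (.nom i) c (.nom k)) Γ), Δ)
  | neqL {Γ Δ : Set (Node P N M C)} (i j : N) (c : C) :
      Step cut [(Γ, insert (.eq (.nom i) c (.nom j)) Δ)]
        (insert (.neq (.nom i) c (.nom j)) Γ, Δ)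
  | neqR {Γ Δ : Set (Node P N M C)} (i j : N) (c : C) :
      Step cut [(insert (.eq (.nom i) c (.nom j)) Γ, Δ)]
        (Γ, insert (.neq (.nom i) c (.nom j)) Δ)
  | cutRule {Γ Δ Γ' Δ' : Set (Node P N M C)} (φ : Node P N M C)
      (ha : φ.Admissible) (hc : cut = true) :
      Step cut [(Γ, insert φ Δ), (insert φ Γ', Δ')] (Γ ∪ Γ', Δ ∪ Δ')
  | wl {Γ Δ : Set (Node P N M C)} (φ : Node P N M C) (ha : φ.Admissible) :
      Step cut [(Γ, Δ)] (insert φ Γ, Δ)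
  | wr {Γ Δ : Set (Node P N M C)} (φ : Node P N M C) (ha : φ.Admissible) :
      Step cut [(Γ, Δ)] (Γ, insert φ Δ)

/-- Derivability in G (`Deriv true`) resp. in G without (Cut) (`Deriv false`):
    a derivation built from the rules whose leaves are instances of the
    zero-premiss rules (Ax) or (⊥). -/
inductive Deriv (cut : Bool) : Sequent P N M C → Prop where
  | step {prems : List (Sequent P N M C)} {concl : Sequent P N M C}
      (h : Step cut prems concl) (ih : ∀ s ∈ prems, Deriv cut s) : Deriv cut concl

/-- Γ ⊢_G Δ : the sequent is provable in G. -/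
def ProvableG (Γ Δ : Set (Node P N M C)) : Prop := Deriv true (Γ, Δ)

/-- M ⊩ φ : global satisfaction. -/
def Model.satG (𝔐 : Model P N M C) (φ : Node P N M C) : Prop := ∀ n, 𝔐.sat φ n

/-- Validity of a sequent. -/
def ValidSeq (S : Sequent P N M C) : Prop :=
  ∀ 𝔐 : Model P N M C, (∀ γ ∈ S.1, 𝔐.satG γ) → ∃ δ ∈ S.2, 𝔐.satG δ

/-- Formulas of the basic hybrid logic H(@): no data comparisons. -/
def Node.IsHybrid : Node P N M C → Prop
  | .prop _ => True
  | .nom _ => True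
  | .bot => True
  | .impl φ ψ => φ.IsHybrid ∧ ψ.IsHybrid
  | .at _ φ => φ.IsHybrid
  | .dia _ φ => φ.IsHybrid
  | .eq _ _ _ => False
  | .neq _ _ _ => False

/-!
Most rules are sound model by model: a model of the conclusion's antecedent either satisfies the
antecedent of a premiss, which then yields a true formula of the conclusion's consequent, or it
makes such a formula true directly. For (Nom), (⟨a⟩L) and (⟨▲⟩L) the premiss is applied to another
model, in which the fresh nominals name the witnesses (`g i`, the `a`-successor, the endpoints of
`α` and `β`). The truth of a formula depends only on the assignment of the nominals occurring in
it, so this reassignment does not affect the formulas of the conclusion.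
-/

open Set Function

def Model.withAssignment (𝔐 : Model P N M C) (g : N → 𝔐.W) : Model P N M C :=
  { 𝔐 with g := g }

section Semantics

variable {𝔐 : Model P N M C}

mutual
theorem Model.satPath_withAssignment {g : N → 𝔐.W} :
    ∀ {α : Path P N M C}, EqOn g 𝔐.g α.noms → ∀ {n n' : 𝔐.W},
      ((𝔐.withAssignment g).satPath α n n' ↔ 𝔐.satPath α n n')
  | .mod _, _, _, _ => Iff.rfl
  | .nom i, h, _, n' => by
      show g i = n' ↔ 𝔐.g i = n'
      rw [h (mem_singleton i)]
  | .test _, h, _, _ => and_congr Iff.rfl (Model.sat_withAssignment h)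
  | .comp _ _, h, _, _ => exists_congr fun _ =>
      and_congr (Model.satPath_withAssignment (h.mono subset_union_left))
        (Model.satPath_withAssignment (h.mono subset_union_right))

theorem Model.sat_withAssignment {g : N → 𝔐.W} :
    ∀ {φ : Node P N M C}, EqOn g 𝔐.g φ.noms → ∀ {n : 𝔐.W},
      ((𝔐.withAssignment g).sat φ n ↔ 𝔐.sat φ n)
  | .prop _, _, _ => Iff.rfl
  | .nom i, h, n => by
      show g i = n ↔ 𝔐.g i = n
      rw [h (mem_singleton i)]
  | .bot, _, _ => Iff.rfl
  | .impl _ _, h, _ => imp_congr (Model.sat_withAssignment (h.mono subset_union_left))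
      (Model.sat_withAssignment (h.mono subset_union_right))
  | .at i φ, h, _ => by
      show (𝔐.withAssignment g).sat φ (g i) ↔ 𝔐.sat φ (𝔐.g i)
      rw [h (mem_insert i _)]
      exact Model.sat_withAssignment (h.mono (subset_insert i _))
  | .dia _ φ, h, _ =>
      exists_congr fun _ => and_congr Iff.rfl (Model.sat_withAssignment (φ := φ) h)
  | .eq _ _ _, h, _ => exists₂_congr fun _ _ =>
      and_congr (Model.satPath_withAssignment (h.mono subset_union_left))
        (and_congr (Model.satPath_withAssignment (h.mono subset_union_right)) Iff.rfl)
  | .neq _ _ _, h, _ => exists₂_congr fun _ _ =>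
      and_congr (Model.satPath_withAssignment (h.mono subset_union_left))
        (and_congr (Model.satPath_withAssignment (h.mono subset_union_right)) Iff.rfl)
end

theorem Model.forall_satG_withAssignment {g : N → 𝔐.W} {Γ : Set (Node P N M C)}
    (h : ∀ γ ∈ Γ, EqOn g 𝔐.g γ.noms) :
    (∀ γ ∈ Γ, (𝔐.withAssignment g).satG γ) ↔ ∀ γ ∈ Γ, 𝔐.satG γ :=
  forall₂_congr fun γ hγ => forall_congr' fun _ => Model.sat_withAssignment (h γ hγ)

theorem Model.exists_satG_withAssignment {g : N → 𝔐.W} {Δ : Set (Node P N M C)}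
    (h : ∀ δ ∈ Δ, EqOn g 𝔐.g δ.noms) :
    (∃ δ ∈ Δ, (𝔐.withAssignment g).satG δ) ↔ ∃ δ ∈ Δ, 𝔐.satG δ :=
  exists_congr fun δ => and_congr_right fun hδ =>
    forall_congr' fun _ => Model.sat_withAssignment (h δ hδ)

theorem eqOn_update_of_notMem {α β : Type*} [DecidableEq α] {f : α → β} {a : α} {b : β}
    {s : Set α} (h : a ∉ s) : EqOn (update f a b) f s :=
  fun _ hx => update_of_ne (ne_of_mem_of_not_mem hx h) b f

theorem FreshIn.eqOn_update [DecidableEq N] {j : N} {Γ : Set (Node P N M C)}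
    (hj : FreshIn j Γ) {f : N → 𝔐.W} {w : 𝔐.W} : ∀ γ ∈ Γ, EqOn (update f j w) f γ.noms :=
  fun γ hγ => eqOn_update_of_notMem (hj γ hγ)

theorem sat_pathDia :
    ∀ {α : Path P N M C} {φ : Node P N M C} {n : 𝔐.W},
      𝔐.sat (α.dia φ) n ↔ ∃ n', 𝔐.satPath α n n' ∧ 𝔐.sat φ n'
  | .mod _, _, _ => Iff.rfl
  | .nom i, φ, _ => show 𝔐.sat φ (𝔐.g i) ↔ ∃ n', 𝔐.g i = n' ∧ 𝔐.sat φ n' from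
      ⟨fun h => ⟨_, rfl, h⟩, fun ⟨_, hi, h⟩ => hi ▸ h⟩
  | .test ψ, φ, n => by
      show ¬(𝔐.sat ψ n → ¬𝔐.sat φ n) ↔ ∃ n', (n = n' ∧ 𝔐.sat ψ n) ∧ 𝔐.sat φ n'
      constructor
      · intro h
        exact ⟨n, ⟨rfl, of_not_not fun hψ => h fun h => absurd h hψ⟩,
          of_not_not fun hφ => h fun _ => hφ⟩
      · rintro ⟨_, ⟨rfl, hψ⟩, hφ⟩ h
        exact h hψ hφ
  | .comp α β, φ, n => by
      simp only [Path.dia, sat_pathDia (α := α), sat_pathDia (α := β), Model.satPath]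
      exact ⟨fun ⟨m, hα, m', hβ, hφ⟩ => ⟨m', ⟨m, hα, hβ⟩, hφ⟩,
        fun ⟨m', ⟨m, hα, hβ⟩, hφ⟩ => ⟨m, hα, m', hβ, hφ⟩⟩

theorem sat_pathDia_nom {α : Path P N M C} {j : N} {n : 𝔐.W} :
    𝔐.sat (α.dia (.nom j)) n ↔ 𝔐.satPath α n (𝔐.g j) :=
  sat_pathDia.trans ⟨fun ⟨_, hα, hj⟩ => hj ▸ hα, fun hα => ⟨_, hα, rfl⟩⟩

theorem satG_at {i : N} {φ : Node P N M C} : 𝔐.satG (.at i φ) ↔ 𝔐.sat φ (𝔐.g i) :=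
  ⟨fun h => h (𝔐.g i), fun h _ => h⟩

theorem satG_at_at {i j : N} {φ : Node P N M C} :
    𝔐.satG (.at j (.at i φ)) ↔ 𝔐.satG (.at i φ) :=
  satG_at.trans satG_at.symm

theorem satG_at_nom {i j : N} : 𝔐.satG (.at i (.nom j)) ↔ 𝔐.g j = 𝔐.g i :=
  satG_at

theorem satG_at_dia_nom {i j : N} {a : M} :
    𝔐.satG (.at i (.dia a (.nom j))) ↔ 𝔐.R a (𝔐.g i) (𝔐.g j) :=
  satG_at.trans ⟨fun ⟨_, hR, hj⟩ => hj ▸ hR, fun hR => ⟨_, hR, rfl⟩⟩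

def Comparison.sem (b : Comparison C) (𝔐 : Model P N M C) (x y : 𝔐.W) : Prop :=
  match b with
  | .ceq c => 𝔐.E c x y
  | .cneq c => ¬𝔐.E c x y

theorem sat_comparison_node {b : Comparison C} {α β : Path P N M C} {n : 𝔐.W} :
    𝔐.sat (b.node α β) n ↔ ∃ x y, 𝔐.satPath α n x ∧ 𝔐.satPath β n y ∧ b.sem 𝔐 x y := by
  cases b <;> rfl

theorem satG_comparison_node_nom {b : Comparison C} {j k : N} :
    𝔐.satG (b.node (.nom j) (.nom k)) ↔ b.sem 𝔐 (𝔐.g j) (𝔐.g k) :=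
  ⟨fun h => by
    obtain ⟨_, _, rfl, rfl, hjk⟩ := sat_comparison_node.1 (h (𝔐.g j))
    exact hjk,
  fun h _ => sat_comparison_node.2 ⟨_, _, rfl, rfl, h⟩⟩

theorem satG_eq_nom {i j : N} {c : C} :
    𝔐.satG (.eq (.nom i) c (.nom j)) ↔ 𝔐.E c (𝔐.g i) (𝔐.g j) :=
  satG_comparison_node_nom (b := .ceq c)

theorem satG_neq_nom {i j : N} {c : C} :
    𝔐.satG (.neq (.nom i) c (.nom j)) ↔ ¬𝔐.E c (𝔐.g i) (𝔐.g j) :=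
  satG_comparison_node_nom (b := .cneq c)

theorem comparison_node_noms {b : Comparison C} {α β : Path P N M C} :
    (b.node α β : Node P N M C).noms = α.noms ∪ β.noms := by
  cases b <;> rfl

end Semantics

namespace ValidSeq

variable {Γ Δ : Set (Node P N M C)}

theorem ax (φ : Node P N M C) : ValidSeq (insert φ Γ, insert φ Δ) :=
  fun _ hΓ => ⟨φ, mem_insert φ Δ, hΓ φ (mem_insert φ Γ)⟩

theorem bot (i : N) : ValidSeq (insert (.at i .bot) Γ, Δ) :=
  fun _ hΓ => (satG_at.1 (hΓ _ (mem_insert _ Γ))).elim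

theorem of_insert_left {φ : Node P N M C} (h : ValidSeq (insert φ Γ, Δ))
    (hφ : ∀ 𝔐 : Model P N M C, (∀ γ ∈ Γ, 𝔐.satG γ) → 𝔐.satG φ) : ValidSeq (Γ, Δ) :=
  fun 𝔐 hΓ => h 𝔐 (forall_mem_insert.2 ⟨hφ 𝔐 hΓ, hΓ⟩)

theorem implL {i : N} {φ ψ : Node P N M C} (h₁ : ValidSeq (Γ, insert (.at i φ) Δ))
    (h₂ : ValidSeq (insert (.at i ψ) Γ, Δ)) : ValidSeq (insert (.at i (.impl φ ψ)) Γ, Δ) := by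
  intro 𝔐 hsat
  obtain ⟨himp, hΓ⟩ := forall_mem_insert.1 hsat
  rcases exists_mem_insert.1 (h₁ 𝔐 hΓ) with hφ | hΔ
  · exact h₂ 𝔐 (forall_mem_insert.2 ⟨satG_at.2 (satG_at.1 himp (satG_at.1 hφ)), hΓ⟩)
  · exact hΔ

theorem implR {i : N} {φ ψ : Node P N M C}
    (h : ValidSeq (insert (.at i φ) Γ, insert (.at i ψ) Δ)) :
    ValidSeq (Γ, insert (.at i (.impl φ ψ)) Δ) := by
  intro 𝔐 hΓ
  by_cases hφ : 𝔐.sat φ (𝔐.g i)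
  · rcases exists_mem_insert.1 (h 𝔐 (forall_mem_insert.2 ⟨satG_at.2 hφ, hΓ⟩)) with hψ | hΔ
    · exact exists_mem_insert.2 (.inl (satG_at.2 fun _ => satG_at.1 hψ))
    · exact exists_mem_insert.2 (.inr hΔ)
  · exact exists_mem_insert.2 (.inl (satG_at.2 fun h => absurd h hφ))

theorem atT {i : N} (h : ValidSeq (insert (.at i (.nom i)) Γ, Δ)) : ValidSeq (Γ, Δ) :=
  h.of_insert_left fun _ _ => satG_at_nom.2 rfl

theorem at5 {i j k : N}
    (h : ValidSeq (insert (.at j (.nom k))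
      (insert (.at i (.nom j)) (insert (.at i (.nom k)) Γ)), Δ)) :
    ValidSeq (insert (.at i (.nom j)) (insert (.at i (.nom k)) Γ), Δ) :=
  h.of_insert_left fun _ hΓ => by
    simp only [forall_mem_insert, satG_at_nom] at hΓ ⊢
    exact hΓ.2.1.trans hΓ.1.symm

theorem nom {i j : N} (hjΓ : FreshIn j Γ) (hjΔ : FreshIn j Δ)
    (h : ValidSeq (insert (.at i (.nom j)) Γ, Δ)) : ValidSeq (Γ, Δ) := by
  classical
  intro 𝔐 hΓ
  let 𝔐' := 𝔐.withAssignment (update 𝔐.g j (𝔐.g i))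
  have hij : 𝔐'.satG (.at i (.nom j)) :=
    satG_at_nom.2 (by simp [𝔐', Model.withAssignment, update_apply])
  refine (Model.exists_satG_withAssignment hjΔ.eqOn_update).1 (h 𝔐' ?_)
  exact forall_mem_insert.2 ⟨hij, (Model.forall_satG_withAssignment hjΓ.eqOn_update).2 hΓ⟩

theorem s1 {i j : N} {φ : Node P N M C}
    (h : ValidSeq (insert (.at j φ) (insert (.at i (.nom j)) (insert (.at i φ) Γ)), Δ)) :
    ValidSeq (insert (.at i (.nom j)) (insert (.at i φ) Γ), Δ) :=
  h.of_insert_left fun _ hΓ => by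
    simp only [forall_mem_insert, satG_at] at hΓ ⊢
    exact hΓ.1 ▸ hΓ.2.1

theorem s2 {i j k : N} {a : M}
    (h : ValidSeq (insert (.at i (.dia a (.nom k)))
      (insert (.at j (.nom k)) (insert (.at i (.dia a (.nom j))) Γ)), Δ)) :
    ValidSeq (insert (.at j (.nom k)) (insert (.at i (.dia a (.nom j))) Γ), Δ) :=
  h.of_insert_left fun _ hΓ => by
    simp only [forall_mem_insert, satG_at_nom, satG_at_dia_nom] at hΓ ⊢
    exact hΓ.1 ▸ hΓ.2.1

theorem s3 {i j k : N} {c : C}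
    (h : ValidSeq (insert (.eq (.nom j) c (.nom k))
      (insert (.at i (.nom j)) (insert (.eq (.nom i) c (.nom k)) Γ)), Δ)) :
    ValidSeq (insert (.at i (.nom j)) (insert (.eq (.nom i) c (.nom k)) Γ), Δ) :=
  h.of_insert_left fun _ hΓ => by
    simp only [forall_mem_insert, satG_at_nom, satG_eq_nom] at hΓ ⊢
    exact hΓ.1 ▸ hΓ.2.1

theorem atL {i j : N} {φ : Node P N M C} (h : ValidSeq (insert (.at i φ) Γ, Δ)) :
    ValidSeq (insert (.at j (.at i φ)) Γ, Δ) := by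
  simpa only [ValidSeq, forall_mem_insert, satG_at_at] using h

theorem atR {i j : N} {φ : Node P N M C} (h : ValidSeq (Γ, insert (.at i φ) Δ)) :
    ValidSeq (Γ, insert (.at j (.at i φ)) Δ) := by
  simpa only [ValidSeq, exists_mem_insert, satG_at_at] using h

theorem diaL {i j : N} {a : M} {φ : Node P N M C}
    (hjΓ : FreshIn j (insert (.at i (.dia a φ)) Γ)) (hjΔ : FreshIn j Δ)
    (h : ValidSeq (insert (.at i (.dia a (.nom j))) (insert (.at j φ) Γ), Δ)) :
    ValidSeq (insert (.at i (.dia a φ)) Γ, Δ) := by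
  classical
  intro 𝔐 hsat
  obtain ⟨hdia, hΓ⟩ := forall_mem_insert.1 hsat
  obtain ⟨w, hR, hφ⟩ := satG_at.1 hdia
  obtain ⟨hjdia, hjΓ⟩ := forall_mem_insert.1 hjΓ
  simp only [Node.noms, mem_insert_iff, not_or] at hjdia
  let g := update 𝔐.g j w
  have hgi : g i = 𝔐.g i := update_of_ne (Ne.symm hjdia.1) w 𝔐.g
  have hgj : g j = w := update_self j w 𝔐.g
  refine (Model.exists_satG_withAssignment hjΔ.eqOn_update).1 (h (𝔐.withAssignment g) ?_)
  refine forall_mem_insert.2 ⟨satG_at_dia_nom.2 ?_, forall_mem_insert.2 ⟨satG_at.2 ?_,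
    (Model.forall_satG_withAssignment (FreshIn.eqOn_update hjΓ)).2 hΓ⟩⟩
  · show 𝔐.R a (g i) (g j)
    rwa [hgi, hgj]
  · show (𝔐.withAssignment g).sat φ (g j)
    rw [hgj]
    exact (Model.sat_withAssignment (eqOn_update_of_notMem hjdia.2)).2 hφ

theorem diaR {i j : N} {a : M} {φ : Node P N M C}
    (h : ValidSeq (insert (.at i (.dia a (.nom j))) Γ,
      insert (.at i (.dia a φ)) (insert (.at j φ) Δ))) :
    ValidSeq (insert (.at i (.dia a (.nom j))) Γ, insert (.at i (.dia a φ)) Δ) := by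
  simp only [ValidSeq, exists_mem_insert] at h ⊢
  intro 𝔐 hsat
  have hR := satG_at_dia_nom.1 (forall_mem_insert.1 hsat).1
  rcases h 𝔐 hsat with hdia | hφ | hΔ
  · exact .inl hdia
  · exact .inl (satG_at.2 ⟨_, hR, satG_at.1 hφ⟩)
  · exact .inr hΔ

theorem cmpL {i j k : N} {α β : Path P N M C} {b : Comparison C} (hjk : j ≠ k)
    (hjΓ : FreshIn j (insert (.at i (b.node α β)) Γ)) (hjΔ : FreshIn j Δ)
    (hkΓ : FreshIn k (insert (.at i (b.node α β)) Γ)) (hkΔ : FreshIn k Δ)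
    (h : ValidSeq (insert (.at i (α.dia (.nom j)))
      (insert (.at i (β.dia (.nom k))) (insert (b.node (.nom j) (.nom k)) Γ)), Δ)) :
    ValidSeq (insert (.at i (b.node α β)) Γ, Δ) := by
  classical
  intro 𝔐 hsat
  obtain ⟨hcmp, hΓ⟩ := forall_mem_insert.1 hsat
  obtain ⟨x, y, hx, hy, hxy⟩ := sat_comparison_node.1 (satG_at.1 hcmp)
  obtain ⟨hjcmp, hjΓ⟩ := forall_mem_insert.1 hjΓ
  obtain ⟨hkcmp, hkΓ⟩ := forall_mem_insert.1 hkΓ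
  simp only [Node.noms, comparison_node_noms, mem_insert_iff, mem_union, not_or] at hjcmp hkcmp
  let g := update (update 𝔐.g j x) k y
  have agree {s : Set N} (hj : j ∉ s) (hk : k ∉ s) : EqOn g 𝔐.g s :=
    (eqOn_update_of_notMem hk).trans (eqOn_update_of_notMem hj)
  have hgi : g i = 𝔐.g i :=
    agree (s := {i}) (by simpa using hjcmp.1) (by simpa using hkcmp.1) rfl
  have hgj : g j = x := by simp [g, update_of_ne hjk]
  have hgk : g k = y := update_self k y (update 𝔐.g j x)
  refine (Model.exists_satG_withAssignment fun δ hδ => agree (hjΔ δ hδ) (hkΔ δ hδ)).1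
    (h (𝔐.withAssignment g) ?_)
  refine forall_mem_insert.2 ⟨satG_at.2 ?_, forall_mem_insert.2 ⟨satG_at.2 ?_,
    forall_mem_insert.2 ⟨satG_comparison_node_nom.2 ?_, ?_⟩⟩⟩
  · rw [sat_pathDia_nom]
    show (𝔐.withAssignment g).satPath α (g i) (g j)
    rw [hgi, hgj]
    exact (Model.satPath_withAssignment (agree hjcmp.2.1 hkcmp.2.1)).2 hx
  · rw [sat_pathDia_nom]
    show (𝔐.withAssignment g).satPath β (g i) (g k)
    rw [hgi, hgk]
    exact (Model.satPath_withAssignment (agree hjcmp.2.2 hkcmp.2.2)).2 hy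
  · show b.sem 𝔐 (g j) (g k)
    rwa [hgj, hgk]
  · exact (Model.forall_satG_withAssignment fun γ hγ => agree (hjΓ γ hγ) (hkΓ γ hγ)).2 hΓ

theorem cmpR {i j k : N} {α β : Path P N M C} {b : Comparison C}
    (h : ValidSeq (insert (.at i (α.dia (.nom j))) (insert (.at i (β.dia (.nom k))) Γ),
      insert (.at i (b.node α β)) (insert (b.node (.nom j) (.nom k)) Δ))) :
    ValidSeq (insert (.at i (α.dia (.nom j))) (insert (.at i (β.dia (.nom k))) Γ),
      insert (.at i (b.node α β)) Δ) := by
  simp only [ValidSeq, exists_mem_insert] at h ⊢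
  intro 𝔐 hsat
  obtain ⟨hα, hβ, -⟩ := by simpa only [forall_mem_insert] using hsat
  rcases h 𝔐 hsat with hcmp | hjk | hΔ
  · exact .inl hcmp
  · exact .inl (satG_at.2 (sat_comparison_node.2 ⟨_, _, sat_pathDia_nom.1 (satG_at.1 hα),
      sat_pathDia_nom.1 (satG_at.1 hβ), satG_comparison_node_nom.1 hjk⟩))
  · exact .inr hΔ

theorem eqT {i : N} {c : C} (h : ValidSeq (insert (.eq (.nom i) c (.nom i)) Γ, Δ)) :
    ValidSeq (Γ, Δ) :=
  h.of_insert_left fun 𝔐 _ => satG_eq_nom.2 ((𝔐.E_equiv c).refl _)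

theorem eq5 {i j k : N} {c : C}
    (h : ValidSeq (insert (.eq (.nom j) c (.nom k))
      (insert (.eq (.nom i) c (.nom j)) (insert (.eq (.nom i) c (.nom k)) Γ)), Δ)) :
    ValidSeq (insert (.eq (.nom i) c (.nom j)) (insert (.eq (.nom i) c (.nom k)) Γ), Δ) :=
  h.of_insert_left fun 𝔐 hΓ => by
    simp only [forall_mem_insert, satG_eq_nom] at hΓ ⊢
    exact (𝔐.E_equiv c).trans ((𝔐.E_equiv c).symm hΓ.1) hΓ.2.1

theorem neqL {i j : N} {c : C} (h : ValidSeq (Γ, insert (.eq (.nom i) c (.nom j)) Δ)) :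
    ValidSeq (insert (.neq (.nom i) c (.nom j)) Γ, Δ) := by
  intro 𝔐 hsat
  obtain ⟨hne, hΓ⟩ := forall_mem_insert.1 hsat
  rcases exists_mem_insert.1 (h 𝔐 hΓ) with heq | hΔ
  · exact absurd (satG_eq_nom.1 heq) (satG_neq_nom.1 hne)
  · exact hΔ

theorem neqR {i j : N} {c : C} (h : ValidSeq (insert (.eq (.nom i) c (.nom j)) Γ, Δ)) :
    ValidSeq (Γ, insert (.neq (.nom i) c (.nom j)) Δ) := by
  intro 𝔐 hΓ
  by_cases heq : 𝔐.E c (𝔐.g i) (𝔐.g j)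
  · exact exists_mem_insert.2 (.inr (h 𝔐 (forall_mem_insert.2 ⟨satG_eq_nom.2 heq, hΓ⟩)))
  · exact exists_mem_insert.2 (.inl (satG_neq_nom.2 heq))

theorem cut {Γ' Δ' : Set (Node P N M C)} {φ : Node P N M C} (h₁ : ValidSeq (Γ, insert φ Δ))
    (h₂ : ValidSeq (insert φ Γ', Δ')) : ValidSeq (Γ ∪ Γ', Δ ∪ Δ') := by
  intro 𝔐 hsat
  rcases exists_mem_insert.1 (h₁ 𝔐 fun γ hγ => hsat γ (.inl hγ)) with hφ | ⟨δ, hδ, hδsat⟩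
  · obtain ⟨δ, hδ, hδsat⟩ := h₂ 𝔐 (forall_mem_insert.2 ⟨hφ, fun γ hγ => hsat γ (.inr hγ)⟩)
    exact ⟨δ, .inr hδ, hδsat⟩
  · exact ⟨δ, .inl hδ, hδsat⟩

theorem weakenL (φ : Node P N M C) (h : ValidSeq (Γ, Δ)) : ValidSeq (insert φ Γ, Δ) :=
  fun 𝔐 hsat => h 𝔐 (forall_mem_insert.1 hsat).2

theorem weakenR (φ : Node P N M C) (h : ValidSeq (Γ, Δ)) : ValidSeq (Γ, insert φ Δ) :=
  fun 𝔐 hΓ => exists_mem_insert.2 (.inr (h 𝔐 hΓ))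

end ValidSeq

/-- every rule of G preserves validity. -/
theorem step_preserves_validity {P N M C : Type} [Countable P] [Infinite P] [Countable N] [Infinite N] [Finite M] [Finite C]
    {prems : List (Sequent P N M C)} {concl : Sequent P N M C}
    (h : Step true prems concl) (hp : ∀ s ∈ prems, ValidSeq s) :
    ValidSeq concl := by
  cases h <;> simp only [List.forall_mem_cons, List.not_mem_nil, IsEmpty.forall_iff,
    implies_true, and_true] at hp
  case ax φ _ => exact .ax φ
  case bot i => exact .bot i
  case implL => exact hp.1.implL hp.2
  case implR => exact hp.implR
  case atT => exact hp.atT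
  case at5 => exact hp.at5
  case nomRule hjΓ hjΔ => exact hp.nom hjΓ hjΔ
  case s1 => exact hp.s1
  case s2 => exact hp.s2
  case s3 => exact hp.s3
  case atL => exact hp.atL
  case atR => exact hp.atR
  case diaL hjΓ hjΔ => exact hp.diaL hjΓ hjΔ
  case diaR => exact hp.diaR
  case cmpL hjk hjΓ hjΔ hkΓ hkΔ => exact hp.cmpL hjk hjΓ hjΔ hkΓ hkΔ
  case cmpR => exact hp.cmpR
  case eqT => exact hp.eqT
  case eq5 => exact hp.eq5
  case neqL => exact hp.neqL
  case neqR => exact hp.neqR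
  case cutRule => exact hp.1.cut hp.2
  case wl φ _ => exact hp.weakenL φ
  case wr φ _ => exact hp.weakenR φ

end HXPathD
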